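/- arXiv:1703.06778 — 4 statements merged into one kernel-verified Lean document; each statement's English description precedes it below -/
import Mathlib

section
/- The sequence defined by p_0=17, p_1=3, p_2=19, p_3=7, p_4=13, and p_i = p_{i-1}+p_{i-2}+p_{i-3}+p_{i-4}+p_{i-5} for i ≥ 5 has its first 11 terms all prime and pairwise distinct, and its 12th term is composite. -/
/-- The pentanacci-like sequence with seeds 17, 3, 19, 7, 13. -/
def t : ℕ → ℕ
  | 0 => 17
  | 1 => 3
  | 2 => 19
  | 3 => 7
  | 4 => 13
  | (i + 5) => t (i + 4) + t (i + 3) + t (i + 2) + t (i + 1) + t i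

lemma tv : t 0 = 17 ∧ t 1 = 3 ∧ t 2 = 19 ∧ t 3 = 7 ∧ t 4 = 13 ∧ t 5 = 59 ∧
    t 6 = 101 ∧ t 7 = 199 ∧ t 8 = 379 ∧ t 9 = 751 ∧ t 10 = 1489 ∧ t 11 = 2919 := by
  exact ⟨rfl, rfl, rfl, rfl, rfl, rfl, rfl, rfl, rfl, rfl, rfl, rfl⟩

/-- The first 11 terms are distinct primes, and the 12th term is composite. -/
theorem stmt9 :
    (∀ i < 11, (t i).Prime) ∧
    (∀ i < 11, ∀ j < 11, i ≠ j → t i ≠ t j) ∧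
    ¬ (t 11).Prime := by
  obtain ⟨h0, h1, h2, h3, h4, h5, h6, h7, h8, h9, h10, h11⟩ := tv
  refine ⟨?_, ?_, ?_⟩
  · intro i hi
    interval_cases i <;> simp_all <;> norm_num
  · intro i hi j hj hij
    interval_cases i <;> interval_cases j <;> simp_all
  · rw [h11]; norm_num
end

section
/- The array (1091, 3001, 271, 257) generates a prime cylinder of order 4 with 6 layers: defining row 0 as this array and each entry of row r > 0 as the sum of the three entries of row r−1 at columns c−1, c, c+1 (mod 4), all 24 resulting entries are prime. -/
/-- The cylinder of order 4 generated from row `(1091, 3001, 271, 257)`: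
each entry of row `r+1` is the sum of the three cyclically adjacent entries above it. -/
def C : ℕ → ℕ → ℕ
  | 0, c => [1091, 3001, 271, 257].getD (c % 4) 0
  | (r + 1), c => C r ((c + 3) % 4) + C r (c % 4) + C r ((c + 1) % 4)

/-- `(1091, 3001, 271, 257)` generates a prime cylinder of order 4 with 6 layers:
all 24 entries are odd primes. -/
theorem stmt14 : ∀ r < 6, ∀ c < 4, (C r c).Prime ∧ Odd (C r c) := by
  intro r hr c hc
  interval_cases r <;> interval_cases c <;>
    refine ⟨by norm_num [C], ?_⟩ <;>
    · rw [Nat.odd_iff]; norm_num [C]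
end

section
/- The 3×3 matrix [[7,5,3],[17,11,3],[3,7,19]] is a Goldbach square of order 3: all entries are odd primes and the twelve adjacent-pair sums are exactly the even numbers 6, 8, 10, …, 28, each occurring exactly once. -/
/-- The matrix `[[7,5,3],[17,11,3],[3,7,19]]`. -/
def M : Fin 3 → Fin 3 → ℕ := ![![7, 5, 3], ![17, 11, 3], ![3, 7, 19]]

/-- `M` is a Goldbach square of order 3: all entries are odd primes and the multiset of
the twelve adjacent-pair sums is exactly the even numbers 6, 8, …, 28, each once. -/
theorem stmt16 :
    (∀ r c, Nat.Prime (M r c) ∧ Odd (M r c)) ∧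
    (([M 0 0 + M 0 1, M 0 1 + M 0 2,
       M 1 0 + M 1 1, M 1 1 + M 1 2,
       M 2 0 + M 2 1, M 2 1 + M 2 2,
       M 0 0 + M 1 0, M 1 0 + M 2 0,
       M 0 1 + M 1 1, M 1 1 + M 2 1,
       M 0 2 + M 1 2, M 1 2 + M 2 2] : Multiset ℕ) =
      ((Finset.Icc 6 28).filter (fun m => Even m)).val) := by
  constructor
  · intro r c
    fin_cases r <;> fin_cases c <;> simp [M] <;> decide
  · simp only [M]
    decide
end

section
/- The array (7, 17, 13, 23, 11, 3, 29, 5, 19) is a prime vector of order 9: its entries are distinct primes, and for every i and L with L ≥ 1 and 0 ≤ i ≤ i+2L ≤ 8, the sum of entries from index i to i+2L is prime (16 sums in total). -/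
def IsPrimeVector (n : ℕ) (P : ℕ → ℕ) : Prop :=
  (∀ i < n, (P i).Prime) ∧
  (∀ i < n, ∀ j < n, i ≠ j → P i ≠ P j) ∧
  (∀ i L : ℕ, i + 2 * L < n → (∑ k ∈ Finset.range (2 * L + 1), P (i + k)).Prime)

theorem isPrimeVector_iff_forall_lt {n : ℕ} {P : ℕ → ℕ} :
    IsPrimeVector n P ↔ (∀ i < n, (P i).Prime) ∧ (∀ i < n, ∀ j < n, i ≠ j → P i ≠ P j) ∧
      ∀ i < n, ∀ L < n, i + 2 * L < n → (∑ k ∈ Finset.range (2 * L + 1), P (i + k)).Prime := by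
  refine and_congr_right' (and_congr_right' ⟨fun h i _ L _ => h i L, fun h i L hiL => ?_⟩)
  exact h i (by omega) L (by omega) hiL

instance (n : ℕ) (P : ℕ → ℕ) : Decidable (IsPrimeVector n P) :=
  decidable_of_iff _ isPrimeVector_iff_forall_lt.symm

/-- `(7, 17, 13, 23, 11, 3, 29, 5, 19)` is a prime vector of order 9. -/
theorem stmt19 :
    IsPrimeVector 9 (fun i => [7, 17, 13, 23, 11, 3, 29, 5, 19].getD i 0) := by
  decide
end
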